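/- Let n ≥ 1, let C be a real n×n matrix, b ∈ ℝⁿ a column vector, c a row vector in ℝⁿ, and β ∈ ℝ. Let Ω, Ω̃ ⊆ ℝⁿ be open, let u : Ω → ℝ and ũ : Ω̃ → ℝ be C² functions, and let φ : Ω → Ω̃, φ(x) = Cx + b·u(x), satisfy ũ(φ(x)) = c·x + β u(x) for all x ∈ Ω. For x ∈ Ω set M(x) = C + b·(∇u(x)) (outer product of the column b with the row gradient ∇u(x)) and assume M(x) is invertible for every x ∈ Ω. Then for all x ∈ Ω: (i) ∇ũ(φ(x)) = (c + β ∇u(x)) M(x)⁻¹; (ii) M(x)ᵀ · Hũ(φ(x)) · M(x) = κ(x) · Hu(x), where Hu and Hũ denote the Hessian matrices of u and ũ and κ(x) = β − ∇ũ(φ(x))·b; (iii) consequently, if κ(x) ≠ 0, then for any symmetric real n×n matrix F one has tr(F · Hu(x)) = 0 if and only if tr( M(x) F M(x)ᵀ · Hũ(φ(x)) ) = 0. -/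

import Mathlib

/-!
Differentiating `ũ ∘ φ = c·x + β u` by the chain rule gives `∇ũ(φ x) · M(x) = c + β ∇u(x)`,
since `M(x)` is the Jacobian matrix of `φ`; inverting `M(x)` gives (i). Differentiating this
identity once more, the product rule yields `Mᵀ Hũ M` from the first factor and `(∇ũ · b) Hu`
from the dependence of `M = C + b ∇u` on `x`, while the right-hand side yields `β Hu`; this is
(ii). Finally `tr(M F Mᵀ Hũ) = tr(F Mᵀ Hũ M) = κ tr(F Hu)`, which gives (iii).
-/

open Matrix

/-- Partial derivative of `f : ℝⁿ → ℝ` in the `i`-th coordinate direction. -/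
noncomputable def pd {n : ℕ} (i : Fin n) (f : (Fin n → ℝ) → ℝ) (x : Fin n → ℝ) : ℝ :=
  fderiv ℝ f x (Pi.single i 1)

open Filter Topology

noncomputable def grad {n : ℕ} (f : (Fin n → ℝ) → ℝ) (x : Fin n → ℝ) : Fin n → ℝ :=
  fun i => pd i f x

/-- `hess f x i j` differentiates the `j`-th partial derivative in direction `i`. -/
noncomputable def hess {n : ℕ} (f : (Fin n → ℝ) → ℝ) (x : Fin n → ℝ) : Matrix (Fin n) (Fin n) ℝ :=
  Matrix.of fun i j => pd i (pd j f) x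

section Calculus

variable {n : ℕ}

theorem fderiv_apply_eq_grad_dotProduct (f : (Fin n → ℝ) → ℝ) (x h : Fin n → ℝ) :
    fderiv ℝ f x h = grad f x ⬝ᵥ h := by
  rw [← ContinuousLinearMap.coe_coe, LinearMap.pi_apply_eq_sum_univ, dotProduct]
  refine Finset.sum_congr rfl fun i _ => ?_
  rw [smul_eq_mul, mul_comm, grad, pd, ContinuousLinearMap.coe_coe]
  congr 2
  ext j
  simp [Pi.single_apply, eq_comm]

theorem HasFDerivAt.pd_eq {f : (Fin n → ℝ) → ℝ} {L : (Fin n → ℝ) →L[ℝ] ℝ} {x : Fin n → ℝ}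
    (h : HasFDerivAt f L x) (i : Fin n) : pd i f x = L (Pi.single i 1) := by
  rw [pd, h.fderiv]

theorem Filter.EventuallyEq.pd_eq {f g : (Fin n → ℝ) → ℝ} {x : Fin n → ℝ} (h : f =ᶠ[𝓝 x] g)
    (i : Fin n) : pd i f x = pd i g x := by
  rw [pd, pd, h.fderiv_eq]

theorem ContDiffAt.differentiableAt_pd {f : (Fin n → ℝ) → ℝ} {x : Fin n → ℝ}
    (hf : ContDiffAt ℝ 2 f x) (i : Fin n) : DifferentiableAt ℝ (pd i f) x :=
  ((hf.fderiv_right (m := 1) le_rfl).differentiableAt one_ne_zero).clm_apply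
    (differentiableAt_const _)

theorem grad_comp_of_hasFDerivAt {v : (Fin n → ℝ) → ℝ} {φ : (Fin n → ℝ) → (Fin n → ℝ)}
    {A : Matrix (Fin n) (Fin n) ℝ} {z : Fin n → ℝ}
    (hφ : HasFDerivAt φ (Matrix.mulVecLin A).toContinuousLinearMap z)
    (hv : DifferentiableAt ℝ v (φ z)) :
    grad (v ∘ φ) z = grad v (φ z) ᵥ* A := by
  funext j
  show pd j (v ∘ φ) z = _
  rw [(hv.hasFDerivAt.comp z hφ).pd_eq, ContinuousLinearMap.comp_apply,
    fderiv_apply_eq_grad_dotProduct, LinearMap.coe_toContinuousLinearMap', mulVecLin_apply,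
    dotProduct_mulVec, dotProduct_single_one]

theorem pd_fun_mul {f g : (Fin n → ℝ) → ℝ} {x : Fin n → ℝ} (hf : DifferentiableAt ℝ f x)
    (hg : DifferentiableAt ℝ g x) (k : Fin n) :
    pd k (fun z => f z * g z) x = pd k f x * g x + f x * pd k g x := by
  simp only [pd, fderiv_fun_mul hf hg, FunLike.coe_add, FunLike.coe_smul, Pi.add_apply,
    Pi.smul_apply, smul_eq_mul]
  ring

theorem pd_fun_sum {ι : Type*} {s : Finset ι} {f : ι → (Fin n → ℝ) → ℝ} {x : Fin n → ℝ}
    (hf : ∀ i ∈ s, DifferentiableAt ℝ (f i) x) (k : Fin n) :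
    pd k (fun z => ∑ i ∈ s, f i z) x = ∑ i ∈ s, pd k (f i) x := by
  simp [pd, fderiv_fun_sum hf]

theorem pd_grad_comp_vecMul {v : (Fin n → ℝ) → ℝ} {φ : (Fin n → ℝ) → (Fin n → ℝ)}
    {A : (Fin n → ℝ) → Matrix (Fin n) (Fin n) ℝ} {x : Fin n → ℝ}
    (hφ : HasFDerivAt φ (Matrix.mulVecLin (A x)).toContinuousLinearMap x)
    (hv : ∀ i, DifferentiableAt ℝ (pd i v) (φ x))
    (hA : ∀ i j, DifferentiableAt ℝ (fun z => A z i j) x) (k j : Fin n) :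
    pd k (fun z => (grad v (φ z) ᵥ* A z) j) x
      = ((A x)ᵀ * hess v (φ x) * A x) k j + ∑ i, grad v (φ x) i * pd k (fun z => A z i j) x := by
  have hdiff : ∀ i, DifferentiableAt ℝ (fun z => pd i v (φ z)) x :=
    fun i => (hv i).comp x hφ.differentiableAt
  have hcomp : ∀ i, pd k (fun z => pd i v (φ z)) x = ((A x)ᵀ * hess v (φ x)) k i := fun i => by
    have := congrFun (grad_comp_of_hasFDerivAt hφ (hv i)) k
    simp only [grad, vecMul, dotProduct] at this
    simp only [mul_apply, transpose_apply, hess, of_apply, mul_comm (A x _ k)]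
    exact this
  show pd k (fun z => ∑ i, pd i v (φ z) * A z i j) x = _
  rw [pd_fun_sum (f := fun i z => pd i v (φ z) * A z i j) fun i _ => (hdiff i).mul (hA i j)]
  simp only [pd_fun_mul (hdiff _) (hA _ _), hcomp, Finset.sum_add_distrib, mul_apply (M := _ * _)]
  rfl

theorem pd_const_add_const_mul {f : (Fin n → ℝ) → ℝ} {x : Fin n → ℝ} (a m : ℝ)
    (hf : DifferentiableAt ℝ f x) (k : Fin n) :
    pd k (fun z => a + m * f z) x = m * pd k f x := by
  simp [pd, fderiv_const_add, fderiv_const_mul hf]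

theorem grad_dotProduct_add_const_mul (c : Fin n → ℝ) (β : ℝ) {u : (Fin n → ℝ) → ℝ}
    {x : Fin n → ℝ} (hu : DifferentiableAt ℝ u x) :
    grad (fun y => c ⬝ᵥ y + β * u y) x = c + β • grad u x := by
  funext j
  have hd : HasFDerivAt (fun y => c ⬝ᵥ y + β * u y) _ x :=
    (dotProductBilin ℝ ℝ c).toContinuousLinearMap.hasFDerivAt.add (hu.hasFDerivAt.const_mul β)
  rw [grad, hd.pd_eq]
  simp [grad, pd]

end Calculus

section PointMap

variable {n : ℕ} (C : Matrix (Fin n) (Fin n) ℝ) (b : Fin n → ℝ) (u : (Fin n → ℝ) → ℝ)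

def pointMap (x : Fin n → ℝ) : Fin n → ℝ := C *ᵥ x + u x • b

noncomputable def pointMapJacobian (x : Fin n → ℝ) : Matrix (Fin n) (Fin n) ℝ :=
  C + vecMulVec b (grad u x)

variable {C b u}

theorem hasFDerivAt_pointMap {x : Fin n → ℝ} (hu : DifferentiableAt ℝ u x) :
    HasFDerivAt (pointMap C b u)
      (Matrix.mulVecLin (pointMapJacobian C b u x)).toContinuousLinearMap x := by
  refine ((Matrix.mulVecLin C).toContinuousLinearMap.hasFDerivAt.add
    (hu.hasFDerivAt.smul_const b)).congr_fderiv ?_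
  ext1 y
  simp [pointMapJacobian, vecMulVec_mulVec, fderiv_apply_eq_grad_dotProduct]

theorem grad_pointMap_vecMul_jacobian {c : Fin n → ℝ} {β : ℝ} {v : (Fin n → ℝ) → ℝ}
    {x : Fin n → ℝ} (hu : DifferentiableAt ℝ u x) (hv : DifferentiableAt ℝ v (pointMap C b u x))
    (hrel : v ∘ pointMap C b u =ᶠ[𝓝 x] fun y => c ⬝ᵥ y + β * u y) :
    grad v (pointMap C b u x) ᵥ* pointMapJacobian C b u x = c + β • grad u x := by
  rw [← grad_comp_of_hasFDerivAt (hasFDerivAt_pointMap hu) hv,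
    ← grad_dotProduct_add_const_mul c β hu]
  funext j
  exact hrel.pd_eq j

theorem transpose_mul_hess_mul_pointMapJacobian {c : Fin n → ℝ} {β : ℝ} {v : (Fin n → ℝ) → ℝ}
    {x : Fin n → ℝ} (hu : ContDiffAt ℝ 2 u x) (hv : ContDiffAt ℝ 2 v (pointMap C b u x))
    (hgrad : ∀ᶠ z in 𝓝 x,
      grad v (pointMap C b u z) ᵥ* pointMapJacobian C b u z = c + β • grad u z) :
    (pointMapJacobian C b u x)ᵀ * hess v (pointMap C b u x) * pointMapJacobian C b u x
      = (β - grad v (pointMap C b u x) ⬝ᵥ b) • hess u x := by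
  ext k j
  have hpdu : ∀ j, DifferentiableAt ℝ (pd j u) x := hu.differentiableAt_pd
  have hJ : ∀ i j, DifferentiableAt ℝ (fun z => pointMapJacobian C b u z i j) x :=
    fun i j => ((hpdu j).const_mul (b i)).const_add (C i j)
  have hJ' : ∀ i, pd k (fun z => pointMapJacobian C b u z i j) x = b i * hess u x k j :=
    fun i => pd_const_add_const_mul (C i j) (b i) (hpdu j) k
  have hchain := pd_grad_comp_vecMul (hasFDerivAt_pointMap (hu.differentiableAt two_ne_zero))
    hv.differentiableAt_pd hJ k j
  have hgrad_j : (fun z => (grad v (pointMap C b u z) ᵥ* pointMapJacobian C b u z) j)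
      =ᶠ[𝓝 x] fun z => (c + β • grad u z) j :=
    hgrad.mono fun z hz => congrFun hz j
  rw [hgrad_j.pd_eq k] at hchain
  have hβ : pd k (fun z => (c + β • grad u z) j) x = β * hess u x k j :=
    pd_const_add_const_mul (c j) β (hpdu j) k
  have hsum : ∑ i, grad v (pointMap C b u x) i * (b i * hess u x k j)
      = (grad v (pointMap C b u x) ⬝ᵥ b) * hess u x k j := by
    simp only [dotProduct, Finset.sum_mul, mul_assoc]
  simp only [hβ, hJ', hsum] at hchain
  rw [Matrix.smul_apply, smul_eq_mul]
  linear_combination -hchain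

end PointMap

theorem trace_mul_eq_zero_iff_of_transpose_mul_mul_eq_smul {ι R : Type*} [Fintype ι] [CommRing R]
    [NoZeroDivisors R] {M H H' : Matrix ι ι R} {κ : R} (hκ : κ ≠ 0)
    (hcongr : Mᵀ * H' * M = κ • H) (F : Matrix ι ι R) :
    trace (F * H) = 0 ↔ trace (M * F * Mᵀ * H') = 0 := by
  have htrace : trace (M * F * Mᵀ * H') = κ * trace (F * H) :=
    calc trace (M * F * Mᵀ * H') = trace (F * (Mᵀ * H' * M)) := by
          rw [Matrix.mul_assoc, Matrix.mul_assoc, trace_mul_comm, Matrix.mul_assoc,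
            Matrix.mul_assoc]
      _ = κ * trace (F * H) := by rw [hcongr, Matrix.mul_smul, trace_smul, smul_eq_mul]
  rw [htrace, mul_eq_zero, or_iff_right hκ]

theorem equivalence_group_form_invariance_general
    {n : ℕ}
    (C : Matrix (Fin n) (Fin n) ℝ) (b c : Fin n → ℝ) (β : ℝ)
    (Ω Ω' : Set (Fin n → ℝ)) (hΩ : IsOpen Ω) (hΩ' : IsOpen Ω')
    (u v : (Fin n → ℝ) → ℝ)
    (hu : ContDiffOn ℝ 2 u Ω) (hv : ContDiffOn ℝ 2 v Ω')
    (φ : (Fin n → ℝ) → (Fin n → ℝ))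
    (hφ : ∀ x, φ x = C *ᵥ x + u x • b)
    (hmap : ∀ x ∈ Ω, φ x ∈ Ω')
    (hrel : ∀ x ∈ Ω, v (φ x) = c ⬝ᵥ x + β * u x)
    (M : (Fin n → ℝ) → Matrix (Fin n) (Fin n) ℝ)
    (hM : ∀ x, M x = C + Matrix.vecMulVec b (fun i => pd i u x))
    (hMinv : ∀ x ∈ Ω, IsUnit (M x).det) :
    ∀ x ∈ Ω,
      ((fun i => pd i v (φ x)) = (c + β • (fun i => pd i u x)) ᵥ* (M x)⁻¹) ∧
      ((M x)ᵀ * Matrix.of (fun i j => pd i (pd j v) (φ x)) * M x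
          = (β - (fun i => pd i v (φ x)) ⬝ᵥ b) • Matrix.of (fun i j => pd i (pd j u) x)) ∧
      (β - (fun i => pd i v (φ x)) ⬝ᵥ b ≠ 0 →
        ∀ F : Matrix (Fin n) (Fin n) ℝ, F.IsSymm →
          (Matrix.trace (F * Matrix.of (fun i j => pd i (pd j u) x)) = 0 ↔
            Matrix.trace (M x * F * (M x)ᵀ
              * Matrix.of (fun i j => pd i (pd j v) (φ x))) = 0)) := by
  obtain rfl : φ = pointMap C b u := funext hφ
  obtain rfl : M = pointMapJacobian C b u := funext hM
  have hu2 : ∀ z ∈ Ω, ContDiffAt ℝ 2 u z := fun z hz => hu.contDiffAt (hΩ.mem_nhds hz)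
  have hv2 : ∀ z ∈ Ω, ContDiffAt ℝ 2 v (pointMap C b u z) :=
    fun z hz => hv.contDiffAt (hΩ'.mem_nhds (hmap z hz))
  have hgrad : ∀ z ∈ Ω,
      grad v (pointMap C b u z) ᵥ* pointMapJacobian C b u z = c + β • grad u z :=
    fun z hz => grad_pointMap_vecMul_jacobian ((hu2 z hz).differentiableAt two_ne_zero)
      ((hv2 z hz).differentiableAt two_ne_zero) (eventuallyEq_of_mem (hΩ.mem_nhds hz) hrel)
  intro x hx
  have hhess := transpose_mul_hess_mul_pointMapJacobian (hu2 x hx) (hv2 x hx)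
    (eventually_of_mem (hΩ.mem_nhds hx) hgrad)
  refine ⟨?_, hhess, fun hκ F _ => trace_mul_eq_zero_iff_of_transpose_mul_mul_eq_smul hκ hhess F⟩
  show grad v (pointMap C b u x) = (c + β • grad u x) ᵥ* (pointMapJacobian C b u x)⁻¹
  rw [← hgrad x hx, vecMul_vecMul, mul_nonsing_inv _ (hMinv x hx), vecMul_one]

/-- Form-invariance of the class of equations `tr(F(∇u)·Hess u) = 0` under the linear
point transformations `x̃ = Cx + bu`, `ũ = cx + βu`: the gradient transforms
projectively, the Hessian transforms by congruence with `M = C + b∇u` and factor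
`κ = β − ∇ũ·b`, and for `κ ≠ 0` the equation `tr(F·Hess u) = 0` is equivalent to
`tr(M F Mᵀ · Hess ũ) = 0`. -/
theorem equivalence_group_form_invariance
    {n : ℕ} (hn : 1 ≤ n)
    (C : Matrix (Fin n) (Fin n) ℝ) (b c : Fin n → ℝ) (β : ℝ)
    (Ω Ω' : Set (Fin n → ℝ)) (hΩ : IsOpen Ω) (hΩ' : IsOpen Ω')
    (u v : (Fin n → ℝ) → ℝ)
    (hu : ContDiffOn ℝ 2 u Ω) (hv : ContDiffOn ℝ 2 v Ω')
    (φ : (Fin n → ℝ) → (Fin n → ℝ))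
    (hφ : ∀ x, φ x = C *ᵥ x + u x • b)
    (hmap : ∀ x ∈ Ω, φ x ∈ Ω')
    (hrel : ∀ x ∈ Ω, v (φ x) = c ⬝ᵥ x + β * u x)
    (M : (Fin n → ℝ) → Matrix (Fin n) (Fin n) ℝ)
    (hM : ∀ x, M x = C + Matrix.vecMulVec b (fun i => pd i u x))
    (hMinv : ∀ x ∈ Ω, IsUnit (M x).det) :
    ∀ x ∈ Ω,
      ((fun i => pd i v (φ x)) = (c + β • (fun i => pd i u x)) ᵥ* (M x)⁻¹) ∧
      ((M x)ᵀ * Matrix.of (fun i j => pd i (pd j v) (φ x)) * M x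
          = (β - (fun i => pd i v (φ x)) ⬝ᵥ b) • Matrix.of (fun i j => pd i (pd j u) x)) ∧
      (β - (fun i => pd i v (φ x)) ⬝ᵥ b ≠ 0 →
        ∀ F : Matrix (Fin n) (Fin n) ℝ, F.IsSymm →
          (Matrix.trace (F * Matrix.of (fun i j => pd i (pd j u) x)) = 0 ↔
            Matrix.trace (M x * F * (M x)ᵀ
              * Matrix.of (fun i j => pd i (pd j v) (φ x))) = 0)) :=
  equivalence_group_form_invariance_general C b c β Ω Ω' hΩ hΩ' u v hu hv φ hφ hmap hrel M hM hMinv
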